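/- The class of n-bounded bigroup homomorphisms is not uniformly complete: for X = ℝ^ℕ with product topology and pointwise product, the truncations σₙ(x,y) = (x₁y₁,…,xₙyₙ,0,…) form a Cauchy sequence in the uniform-convergence-on-zero-neighborhoods topology whose uniform limit σ(x,y) = xy is a bigroup homomorphism that is not n-bounded. -/

import Mathlib

abbrev RN : Type := ℕ → ℝ

/-- `B` is bounded in the topological module sense (`RN` over itself). -/
def RNBdd (B : Set RN) : Prop :=
  ∀ W ∈ nhds (0 : RN), ∃ V ∈ nhds (0 : RN), ∀ v ∈ V, ∀ b ∈ B, v * b ∈ W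

/-- The `n`-th truncation bigroup homomorphism. -/
def trunc (n : ℕ) (x y : RN) : RN := fun i => if i < n then x i * y i else 0

/-! A zero neighbourhood of `ℝ^ℕ` constrains only finitely many coordinates. Hence `σₙ - σ`,
which vanishes on the first `n` coordinates, eventually lies in any of them, and any two of
them contain a common coordinate line `ℝ eⱼ`; its image `ℝ eⱼ` under `σ` cannot be pushed
into `{w | |w j| < 1}` by any zero neighbourhood. On the other hand `σₙ` maps the cube
`{x | ∀ i < n, |x i| < 1}` squared into the sup-norm unit ball, which is bounded. -/

open Filter Set Topology

section PiNhdsZero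

variable {ι M : Type*} [TopologicalSpace M] [Zero M]

theorem exists_finite_forall_eqOn_zero_mem {W : Set (ι → M)} (hW : W ∈ 𝓝 0) :
    ∃ I : Set ι, I.Finite ∧ ∀ w : ι → M, EqOn w 0 I → w ∈ W := by
  rw [nhds_pi, Filter.mem_pi] at hW
  obtain ⟨I, hI, t, ht, hsub⟩ := hW
  exact ⟨I, hI, fun w hw => hsub fun i hi => hw hi ▸ mem_of_mem_nhds (ht i)⟩

theorem eventually_cofinite_forall_single_mem [DecidableEq ι] {W : Set (ι → M)}
    (hW : W ∈ 𝓝 0) : ∀ᶠ j in cofinite, ∀ r : M, Pi.single j r ∈ W := by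
  obtain ⟨I, hI, hmem⟩ := exists_finite_forall_eqOn_zero_mem hW
  filter_upwards [hI.eventually_cofinite_notMem] with j hj r
  exact hmem _ fun i hi => by simp [ne_of_mem_of_not_mem hi hj]

theorem eventually_atTop_forall_eqOn_Iio_zero_mem {W : Set (ℕ → M)} (hW : W ∈ 𝓝 0) :
    ∀ᶠ n in atTop, ∀ w : ℕ → M, EqOn w 0 (Iio n) → w ∈ W := by
  obtain ⟨I, hI, hmem⟩ := exists_finite_forall_eqOn_zero_mem hW
  obtain ⟨N, hN⟩ := hI.bddAbove
  filter_upwards [eventually_gt_atTop N] with n hn w hw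
  exact hmem w fun i hi => hw ((hN hi).trans_lt hn)

end PiNhdsZero

theorem rnBdd_of_forall_abs_le_one {B : Set RN} (hB : ∀ b ∈ B, ∀ i, |b i| ≤ 1) : RNBdd B := by
  intro W hW
  rw [nhds_pi, Filter.mem_pi] at hW
  obtain ⟨I, hI, t, ht, hsub⟩ := hW
  choose ε hε hball using fun i => Metric.mem_nhds_iff.mp (ht i)
  refine ⟨I.pi fun i => Metric.ball 0 (ε i),
    set_pi_mem_nhds hI fun i _ => Metric.ball_mem_nhds 0 (hε i),
    fun v hv b hb => hsub fun i hi => hball i ?_⟩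
  have hvi : |v i| < ε i := by simpa using hv i hi
  rw [Pi.zero_apply, mem_ball_zero_iff, Real.norm_eq_abs]
  calc |(v * b) i| = |v i| * |b i| := abs_mul _ _
    _ ≤ |v i| := mul_le_of_le_one_right (abs_nonneg _) (hB b hb i)
    _ < ε i := hvi

theorem not_rnBdd_of_forall_single_mem {B : Set RN} (j : ℕ) (hB : ∀ r, Pi.single j r ∈ B) :
    ¬ RNBdd B := by
  intro hBdd
  have hW : {w : RN | |w j| < 1} ∈ 𝓝 0 :=
    isOpen_lt (continuous_apply j).abs continuous_const |>.mem_nhds (by simp)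
  obtain ⟨V, hV, hmul⟩ := hBdd _ hW
  have hsingle : ∀ᶠ c in 𝓝[≠] (0 : ℝ), Pi.single j c ∈ V :=
    nhdsWithin_le_nhds <| (continuous_single j).tendsto' 0 0 (by simp) hV
  obtain ⟨c, hcV, hc⟩ := (hsingle.and self_mem_nhdsWithin).exists
  have := hmul _ hcV _ (hB c⁻¹)
  simp [← Pi.single_mul, mul_inv_cancel₀ hc] at this

theorem trunc_sub_mul_eqOn_Iio (n : ℕ) (x y : RN) : EqOn (trunc n x y - x * y) 0 (Iio n) :=
  fun i hi => by simp [trunc, mem_Iio.mp hi]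

theorem abs_trunc_le_one {n : ℕ} {x y : RN} (hx : ∀ i < n, |x i| < 1) (hy : ∀ i < n, |y i| < 1)
    (i : ℕ) : |trunc n x y i| ≤ 1 := by
  unfold trunc
  split_ifs with hi
  · rw [abs_mul]
    exact mul_le_one₀ (hx i hi).le (abs_nonneg _) (hy i hi).le
  · simp

/-- B_n(X × X) is not uniformly complete: each truncation σₙ is n-bounded, the σₙ
converge uniformly on X × X to the pointwise product σ, but σ is not n-bounded. -/
theorem stmt13 :
    (∀ n : ℕ, ∃ U ∈ nhds (0 : RN), ∃ V ∈ nhds (0 : RN),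
      RNBdd (Set.image2 (trunc n) U V)) ∧
    (∀ W ∈ nhds (0 : RN), ∃ N : ℕ, ∀ n ≥ N, ∀ x y : RN, trunc n x y - x * y ∈ W) ∧
    ¬ ∃ U ∈ nhds (0 : RN), ∃ V ∈ nhds (0 : RN),
      RNBdd (Set.image2 (fun x y : RN => x * y) U V) := by
  refine ⟨fun n => ?_, fun W hW => ?_, ?_⟩
  · have hU : (Iio n).pi (fun _ => Metric.ball (0 : ℝ) 1) ∈ 𝓝 (0 : RN) :=
      set_pi_mem_nhds (finite_Iio n) fun _ _ => Metric.ball_mem_nhds 0 one_pos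
    refine ⟨_, hU, _, hU, rnBdd_of_forall_abs_le_one ?_⟩
    rintro _ ⟨x, hx, y, hy, rfl⟩
    exact abs_trunc_le_one (fun i hi => by simpa using hx i hi) (fun i hi => by simpa using hy i hi)
  · obtain ⟨N, hN⟩ := eventually_atTop.mp (eventually_atTop_forall_eqOn_Iio_zero_mem hW)
    exact ⟨N, fun n hn x y => hN n hn _ (trunc_sub_mul_eqOn_Iio n x y)⟩
  · rintro ⟨U, hU, V, hV, hBdd⟩
    obtain ⟨j, hjU, hjV⟩ := ((eventually_cofinite_forall_single_mem hU).and
      (eventually_cofinite_forall_single_mem hV)).exists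
    refine not_rnBdd_of_forall_single_mem j (fun r => ?_) hBdd
    have := mem_image2_of_mem (f := fun x y : RN => x * y) (hjU r) (hjV 1)
    rwa [← Pi.single_mul, mul_one] at this
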